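/- arXiv:1003.2044 — 2 statements merged into one kernel-verified Lean document; each statement's English description precedes it below -/
import Mathlib

section
/- Let {x, x₁} be a Bertrand D-pair with constant λ ≠ 0, correspondence s and angle function θ. If x is a principal line (τ_g ≡ 0), then for every s₁ the geodesic curvatures satisfy k_{g₁}(s₁) = k_g(s(s₁)) · (1 + λ k_g(s(s₁)))² · cos θ(s₁) · (s'(s₁))³. -/
noncomputable section

abbrev E3 := EuclideanSpace ℝ (Fin 3)

/-- Cross product on `EuclideanSpace ℝ (Fin 3)`. -/
def cross3 (a b : E3) : E3 :=
  WithLp.toLp 2 ![a 1 * b 2 - a 2 * b 1, a 2 * b 0 - a 0 * b 2, a 0 * b 1 - a 1 * b 0]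

/-- Darboux frame vector `g = n × T`, where `T = x'`. -/
def gvec (x n : ℝ → E3) : ℝ → E3 := fun t => cross3 (n t) (deriv x t)

/-- Geodesic curvature `k_g = ⟪T', g⟫`. -/
def geodCurv (x n : ℝ → E3) : ℝ → ℝ := fun t => (inner ℝ (deriv (deriv x) t) (gvec x n t) : ℝ)

/-- Normal curvature `k_n = ⟪T', n⟫`. -/
def normCurv (x n : ℝ → E3) : ℝ → ℝ := fun t => (inner ℝ (deriv (deriv x) t) (n t) : ℝ)

/-- Geodesic torsion `τ_g = ⟪g', n⟫`. -/
def geodTors (x n : ℝ → E3) : ℝ → ℝ := fun t => (inner ℝ (deriv (gvec x n) t) (n t) : ℝ)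

/-- A unit-speed smooth curve `x` on an oriented surface, encoded by a smooth unit
normal field `n` along `x` orthogonal to the tangent. -/
def IsDarbouxCurve (x n : ℝ → E3) : Prop :=
  ContDiff ℝ (⊤ : ℕ∞) x ∧ ContDiff ℝ (⊤ : ℕ∞) n ∧ (∀ t, ‖deriv x t‖ = 1) ∧ (∀ t, ‖n t‖ = 1) ∧
    ∀ t, (inner ℝ (n t) (deriv x t) : ℝ) = 0

/-- `{x, x₁}` is a Bertrand D-pair with constant `lam ≠ 0`, smooth increasing
correspondence `s` and smooth angle function `θ`. -/
def IsBertrandDPair (x n x₁ n₁ : ℝ → E3) (lam : ℝ) (s θ : ℝ → ℝ) : Prop :=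
  IsDarbouxCurve x n ∧ IsDarbouxCurve x₁ n₁ ∧ lam ≠ 0 ∧
    ContDiff ℝ (⊤ : ℕ∞) s ∧ (∀ t, 0 < deriv s t) ∧
    (∀ t, x (s t) = x₁ t + lam • gvec x₁ n₁ t) ∧
    (∀ t, gvec x n (s t) = gvec x₁ n₁ t) ∧
    ContDiff ℝ (⊤ : ℕ∞) θ ∧
    (∀ t, deriv x (s t) = Real.cos (θ t) • deriv x₁ t - Real.sin (θ t) • n₁ t) ∧
    (∀ t, n (s t) = Real.sin (θ t) • deriv x₁ t + Real.cos (θ t) • n₁ t)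

open RealInnerProductSpace

lemma inner3 (a b : E3) : ⟪a, b⟫ = a 0 * b 0 + a 1 * b 1 + a 2 * b 2 := by
  simp [PiLp.inner_apply, Fin.sum_univ_three, RCLike.inner_apply, conj_trivial]; ring

lemma cross_orth_right (a b : E3) : ⟪cross3 a b, b⟫ = 0 := by
  rw [inner3]; simp [cross3]; ring

lemma contDiff_gvec {x n : ℝ → E3} (hx : ContDiff ℝ (⊤ : ℕ∞) x) (hn : ContDiff ℝ (⊤ : ℕ∞) n) :
    ContDiff ℝ (⊤ : ℕ∞) (gvec x n) := by
  have hx' : ContDiff ℝ (⊤ : ℕ∞) (deriv x) := (contDiff_infty_iff_deriv.mp (hx.of_le (by simp))).2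
  have hn' : ContDiff ℝ (⊤ : ℕ∞) n := hn.of_le (by simp)
  have hni := contDiff_euclidean.mp hn'
  have hxi := contDiff_euclidean.mp hx'
  refine contDiff_euclidean.mpr fun i => ?_
  fin_cases i
  · simpa [gvec, cross3] using ((hni 1).mul (hxi 2)).sub ((hni 2).mul (hxi 1))
  · simpa [gvec, cross3] using ((hni 2).mul (hxi 0)).sub ((hni 0).mul (hxi 2))
  · simpa [gvec, cross3] using ((hni 0).mul (hxi 1)).sub ((hni 1).mul (hxi 0))

theorem bertrand_D_stmt_16
    (x n x₁ n₁ : ℝ → E3) (lam : ℝ) (s θ : ℝ → ℝ)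
    (hpair : IsBertrandDPair x n x₁ n₁ lam s θ)
    (hprin : ∀ t, geodTors x n t = 0) :
    ∀ t, geodCurv x₁ n₁ t =
      geodCurv x n (s t) * (1 + lam * geodCurv x n (s t)) ^ 2 * Real.cos (θ t) * (deriv s t) ^ 3 := by
  obtain ⟨hxD, hx1D, hlam, hsC, hsp, hxeq, hgeq, hθC, hTeq, hneq⟩ := hpair
  obtain ⟨hxC, hnC, hxu, hnu, hxn⟩ := hxD
  obtain ⟨hx1C, hn1C, hx1u, hn1u, hx1n⟩ := hx1D
  intro t
  -- differentiability facts
  have hgC : ContDiff ℝ (⊤ : ℕ∞) (gvec x n) := contDiff_gvec hxC hnC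
  have hg1C : ContDiff ℝ (⊤ : ℕ∞) (gvec x₁ n₁) := contDiff_gvec hx1C hn1C
  have hTC : ContDiff ℝ (⊤ : ℕ∞) (deriv x) := (contDiff_infty_iff_deriv.mp (hxC.of_le (by simp))).2
  have hT1C : ContDiff ℝ (⊤ : ℕ∞) (deriv x₁) :=
    (contDiff_infty_iff_deriv.mp (hx1C.of_le (by simp))).2
  have h1top : ((⊤ : ℕ∞) : WithTop ℕ∞) ≠ 0 := by simp
  have hgd : Differentiable ℝ (gvec x n) := hgC.differentiable h1top
  have hg1d : Differentiable ℝ (gvec x₁ n₁) := hg1C.differentiable h1top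
  have hTd : Differentiable ℝ (deriv x) := hTC.differentiable h1top
  have hT1d : Differentiable ℝ (deriv x₁) := hT1C.differentiable h1top
  have hxd : Differentiable ℝ x := hxC.differentiable (by simp)
  have hx1d : Differentiable ℝ x₁ := hx1C.differentiable (by simp)
  have hsd : Differentiable ℝ s := hsC.differentiable (by simp)
  -- vector equation A : p • T(s t) = T₁ + lam • g₁'
  have hAfun : (fun τ => x (s τ)) = fun τ => x₁ τ + lam • gvec x₁ n₁ τ := funext hxeq
  have hA1 : deriv (fun τ => x (s τ)) t = deriv s t • deriv x (s t) := by
    rw [← Function.comp_def x s]; exact deriv.scomp t (hxd (s t)) (hsd t)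
  have hA : deriv s t • deriv x (s t) = deriv x₁ t + lam • deriv (gvec x₁ n₁) t := by
    rw [← hA1, hAfun, deriv_fun_add (g := fun τ => lam • gvec x₁ n₁ τ) (hx1d t) ((hg1d t).const_smul lam),
      deriv_fun_const_smul lam (hg1d t)]
  -- vector equation B : p • g'(s t) = g₁'
  have hBfun : (fun τ => gvec x n (s τ)) = gvec x₁ n₁ := funext hgeq
  have hB : deriv s t • deriv (gvec x n) (s t) = deriv (gvec x₁ n₁) t := by
    have hB1 : deriv (fun τ => gvec x n (s τ)) t = deriv s t • deriv (gvec x n) (s t) := by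
      rw [← Function.comp_def (gvec x n) s]; exact deriv.scomp t (hgd (s t)) (hsd t)
    rw [← hB1, hBfun]
  -- basic inner products
  have iT1T1 : ⟪deriv x₁ t, deriv x₁ t⟫ = 1 := by
    rw [real_inner_self_eq_norm_sq, hx1u t]; norm_num
  have in1n1 : ⟪n₁ t, n₁ t⟫ = 1 := by
    rw [real_inner_self_eq_norm_sq, hn1u t]; norm_num
  have in1T1 : ⟪n₁ t, deriv x₁ t⟫ = 0 := hx1n t
  have iT1n1 : ⟪deriv x₁ t, n₁ t⟫ = 0 := by rw [real_inner_comm]; exact hx1n t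
  have iTuT1 : ⟪deriv x (s t), deriv x₁ t⟫ = Real.cos (θ t) := by
    rw [hTeq t, inner_sub_left, real_inner_smul_left, real_inner_smul_left, iT1T1, in1T1]; ring
  have iTun1 : ⟪deriv x (s t), n₁ t⟫ = -Real.sin (θ t) := by
    rw [hTeq t, inner_sub_left, real_inner_smul_left, real_inner_smul_left, iT1n1, in1n1]; ring
  -- derivative of orthogonality : ⟪g₁', T₁⟫ = -k_{g₁}
  have hG1T1 : ⟪deriv (gvec x₁ n₁) t, deriv x₁ t⟫ = -(geodCurv x₁ n₁ t) := by
    have horth : (fun τ => ⟪gvec x₁ n₁ τ, deriv x₁ τ⟫) = fun _ => (0 : ℝ) :=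
      funext fun τ => cross_orth_right (n₁ τ) (deriv x₁ τ)
    have hD := HasDerivAt.inner ℝ (hg1d t).hasDerivAt (hT1d t).hasDerivAt
    rw [horth] at hD
    have h0 := hD.unique (hasDerivAt_const t 0)
    have h2 : ⟪gvec x₁ n₁ t, deriv (deriv x₁) t⟫ = geodCurv x₁ n₁ t := real_inner_comm _ _
    linarith [h0, h2]
  -- derivative of orthogonality at s t : ⟪g'(s t), T(s t)⟫ = -k_g(s t)
  have hGuTu : ⟪deriv (gvec x n) (s t), deriv x (s t)⟫ = -(geodCurv x n (s t)) := by
    have horth : (fun τ => ⟪gvec x n τ, deriv x τ⟫) = fun _ => (0 : ℝ) :=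
      funext fun τ => cross_orth_right (n τ) (deriv x τ)
    have hD := HasDerivAt.inner ℝ (hgd (s t)).hasDerivAt (hTd (s t)).hasDerivAt
    rw [horth] at hD
    have h0 := hD.unique (hasDerivAt_const (s t) 0)
    have h2 : ⟪gvec x n (s t), deriv (deriv x) (s t)⟫ = geodCurv x n (s t) :=
      real_inner_comm _ _
    linarith [h0, h2]
  have hg1n1 : ⟪deriv (gvec x₁ n₁) t, n₁ t⟫ = geodTors x₁ n₁ t := rfl
  -- equation (1)
  have e1 : deriv s t * Real.cos (θ t) = 1 - lam * geodCurv x₁ n₁ t := by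
    have h := congrArg (fun v : E3 => ⟪v, deriv x₁ t⟫) hA
    simp only [inner_add_left, real_inner_smul_left] at h
    rw [iTuT1, iT1T1, hG1T1] at h
    linarith [h]
  -- equation (2)
  have e2 : -(deriv s t * Real.sin (θ t)) = lam * geodTors x₁ n₁ t := by
    have h := congrArg (fun v : E3 => ⟪v, n₁ t⟫) hA
    simp only [inner_add_left, real_inner_smul_left] at h
    rw [iTun1, iT1n1, hg1n1] at h
    linarith [h]
  -- equation (3)
  have e3 : Real.sin (θ t) * geodCurv x₁ n₁ t = Real.cos (θ t) * geodTors x₁ n₁ t := by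
    have hL : ⟪deriv (gvec x n) (s t), n (s t)⟫ = 0 := hprin (s t)
    have h := congrArg (fun v : E3 => ⟪v, n (s t)⟫) hB
    simp only [real_inner_smul_left] at h
    rw [hL] at h
    rw [hneq t, inner_add_right, real_inner_smul_right, real_inner_smul_right,
      hG1T1, hg1n1] at h
    linarith [h]
  -- equation (4)
  have e4 : deriv s t * geodCurv x n (s t) =
      Real.cos (θ t) * geodCurv x₁ n₁ t + Real.sin (θ t) * geodTors x₁ n₁ t := by
    have h := congrArg (fun v : E3 => ⟪v, deriv x (s t)⟫) hB
    simp only [real_inner_smul_left] at h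
    rw [hGuTu, hTeq t, inner_sub_right, real_inner_smul_right, real_inner_smul_right,
      hG1T1, hg1n1] at h
    linarith [h]
  -- algebra
  set p := deriv s t with hp
  set c := Real.cos (θ t) with hc
  set σ := Real.sin (θ t) with hσdef
  set a := geodCurv x₁ n₁ t with ha'
  set b := geodTors x₁ n₁ t with hb'
  set k := geodCurv x n (s t) with hk'
  have pyth : σ ^ 2 + c ^ 2 = 1 := Real.sin_sq_add_cos_sq (θ t)
  have hσ : σ = 0 := by linear_combination lam * e3 - c * e2 - σ * e1
  have hb : b = 0 := by
    have h : lam * b = 0 := by rw [← e2, hσ]; ring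
    exact (mul_eq_zero.mp h).resolve_left hlam
  have hc2 : c ^ 2 = 1 := by linear_combination pyth - σ * hσ
  have ha : a = p * k * c := by
    linear_combination (-c) * e4 + (-a) * hc2 + (-(c * σ)) * hb
  have hpc1 : p * c * (1 + lam * k) = 1 := by
    linear_combination e1 + lam * c * e4 + lam * a * hc2 + lam * c * σ * hb
  linear_combination ha + (-(k * p * c * (1 + p * c * (1 + lam * k)))) * hpc1 +
    (k * p ^ 3 * c * (1 + lam * k) ^ 2) * hc2
end
end

section
/- Let {x, x₁} be a Bertrand D-pair with constant λ ≠ 0, correspondence s and angle function θ. If x is a principal line (τ_g ≡ 0), then for every s₁ the geodesic torsion of x₁ satisfies τ_{g₁}(s₁) = k_g(s(s₁)) · (1 + λ k_g(s(s₁))) · sin θ(s₁) cos θ(s₁) · (s'(s₁))². -/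
noncomputable section

lemma hasDerivAt_cross3 {f g : ℝ → E3} {f' g' : E3} {t : ℝ}
    (hf : HasDerivAt f f' t) (hg : HasDerivAt g g' t) :
    HasDerivAt (fun u => cross3 (f u) (g u)) (cross3 f' (g t) + cross3 (f t) g') t := by
  have hfi : ∀ i, HasDerivAt (fun u => f u i) (f' i) t := fun i =>
    (EuclideanSpace.proj (𝕜 := ℝ) i).hasFDerivAt.comp_hasDerivAt t hf
  have hgi : ∀ i, HasDerivAt (fun u => g u i) (g' i) t := fun i =>
    (EuclideanSpace.proj (𝕜 := ℝ) i).hasFDerivAt.comp_hasDerivAt t hg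
  have key : ∀ i, HasDerivAt (fun u => cross3 (f u) (g u) i)
      ((cross3 f' (g t) + cross3 (f t) g') i) t := by
    intro i
    fin_cases i
    · have h' : HasDerivAt (fun u => cross3 (f u) (g u) 0)
          (f' 1 * g t 2 + f t 1 * g' 2 - (f' 2 * g t 1 + f t 2 * g' 1)) t := by
        simpa [cross3, Pi.mul_def, Pi.sub_def] using ((hfi 1).mul (hgi 2)).sub ((hfi 2).mul (hgi 1))
      convert h' using 1
      simp [cross3, PiLp.add_apply]; ring; simp [cross3]; ring
    · have h' : HasDerivAt (fun u => cross3 (f u) (g u) 1)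
          (f' 2 * g t 0 + f t 2 * g' 0 - (f' 0 * g t 2 + f t 0 * g' 2)) t := by
        simpa [cross3, Pi.mul_def, Pi.sub_def] using ((hfi 2).mul (hgi 0)).sub ((hfi 0).mul (hgi 2))
      convert h' using 1
      simp [cross3, PiLp.add_apply]; ring; simp [cross3]; ring
    · have h' : HasDerivAt (fun u => cross3 (f u) (g u) 2)
          (f' 0 * g t 1 + f t 0 * g' 1 - (f' 1 * g t 0 + f t 1 * g' 0)) t := by
        simpa [cross3, Pi.mul_def, Pi.sub_def] using ((hfi 0).mul (hgi 1)).sub ((hfi 1).mul (hgi 0))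
      convert h' using 1
      simp [cross3, PiLp.add_apply]; ring; simp [cross3]; ring
  have hpi : HasDerivAt (fun u => (fun i => cross3 (f u) (g u) i : Fin 3 → ℝ))
      (fun i => (cross3 f' (g t) + cross3 (f t) g') i) t := hasDerivAt_pi.2 key
  exact ((PiLp.continuousLinearEquiv 2 ℝ (fun _ : Fin 3 => ℝ)).symm.toContinuousLinearMap.hasFDerivAt.comp_hasDerivAt t hpi : _)

lemma inner_cross3_right (a b : E3) : (inner ℝ (cross3 a b) b : ℝ) = 0 := by
  simp [cross3, PiLp.inner_apply, Fin.sum_univ_three]; ring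

lemma deriv_diff_of_contDiff {f : ℝ → E3} (h : ContDiff ℝ (⊤ : ℕ∞) f) :
    Differentiable ℝ (deriv f) := by
  have h2 : ContDiff ℝ (⊤ : ℕ∞) f := h.of_le (by simp)
  exact (contDiff_infty_iff_deriv.mp h2).2.differentiable (by simp)

theorem bertrand_D_stmt_18
    (x n x₁ n₁ : ℝ → E3) (lam : ℝ) (s θ : ℝ → ℝ)
    (hpair : IsBertrandDPair x n x₁ n₁ lam s θ)
    (hprin : ∀ t, geodTors x n t = 0) :
    ∀ t, geodTors x₁ n₁ t =
      geodCurv x n (s t) * (1 + lam * geodCurv x n (s t)) * Real.sin (θ t) * Real.cos (θ t) * (deriv s t) ^ 2 := by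
  obtain ⟨hx, hx1, hlam, hs, hspos, hpos, hgeq, hθ, hT, hn⟩ := hpair
  obtain ⟨hxs, hns, hxu, hnu, hno⟩ := hx
  obtain ⟨hx1s, hn1s, hx1u, hn1u, hn1o⟩ := hx1
  intro t
  set σ := s t with hσ
  set sp := deriv s t with hsp
  set sθ := Real.sin (θ t) with hsθ
  set cθ := Real.cos (θ t) with hcθ
  set k := geodCurv x n σ with hk
  -- basic derivative facts
  have hxd : Differentiable ℝ x := hxs.differentiable (by simp)
  have hnσ : HasDerivAt n (deriv n σ) σ := ((hns.differentiable (by simp)) σ).hasDerivAt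
  have hTσ : HasDerivAt (deriv x) (deriv (deriv x) σ) σ :=
    ((deriv_diff_of_contDiff hxs) σ).hasDerivAt
  have hT1t : HasDerivAt (deriv x₁) (deriv (deriv x₁) t) t :=
    ((deriv_diff_of_contDiff hx1s) t).hasDerivAt
  have hsder : HasDerivAt s sp t := ((hs.differentiable (by simp)) t).hasDerivAt
  -- derivative of g at σ
  set G := cross3 (deriv n σ) (deriv x σ) + cross3 (n σ) (deriv (deriv x) σ) with hG
  have hGσ : HasDerivAt (gvec x n) G σ := hasDerivAt_cross3 hnσ hTσ
  -- chain rule : g₁ = g ∘ s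
  have hcompeq : (gvec x n) ∘ s = gvec x₁ n₁ := funext hgeq
  have hG1 : HasDerivAt (gvec x₁ n₁) (sp • G) t := by
    have := hGσ.scomp t hsder
    rwa [hcompeq] at this
  -- inner products with G
  have hGn : (inner ℝ G (n σ) : ℝ) = 0 := by
    have h0 := hprin σ
    rw [geodTors, hGσ.deriv] at h0
    exact h0
  have hGT : (inner ℝ G (deriv x σ) : ℝ) = -k := by
    have hdz := HasDerivAt.inner ℝ hGσ hTσ
    have hzero : (fun u => (inner ℝ (gvec x n u) (deriv x u) : ℝ)) = fun _ => 0 :=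
      funext fun u => inner_cross3_right (n u) (deriv x u)
    rw [hzero] at hdz
    have huniq := hdz.unique (hasDerivAt_const σ (0 : ℝ))
    have hsymm : (inner ℝ (gvec x n σ) (deriv (deriv x) σ) : ℝ) = k := by
      rw [hk, geodCurv, real_inner_comm]
    linarith [huniq, hsymm]
  -- decompositions of n₁ t and deriv x₁ t in the frame at σ
  have hn1dec : n₁ t = (-sθ) • deriv x σ + cθ • n σ := by
    have hmod : (-sθ) • (cθ • deriv x₁ t - sθ • n₁ t) + cθ • (sθ • deriv x₁ t + cθ • n₁ t)
        = (sθ ^ 2 + cθ ^ 2) • n₁ t := by module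
    rw [hT t, hn t, ← hsθ, ← hcθ, hmod, hsθ, hcθ, Real.sin_sq_add_cos_sq, one_smul]
  have hT1dec : deriv x₁ t = cθ • deriv x σ + sθ • n σ := by
    have hmod : cθ • (cθ • deriv x₁ t - sθ • n₁ t) + sθ • (sθ • deriv x₁ t + cθ • n₁ t)
        = (sθ ^ 2 + cθ ^ 2) • deriv x₁ t := by module
    rw [hT t, hn t, ← hsθ, ← hcθ, hmod, hsθ, hcθ, Real.sin_sq_add_cos_sq, one_smul]
  have hGn1 : (inner ℝ G (n₁ t) : ℝ) = sθ * k := by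
    rw [hn1dec, inner_add_right, real_inner_smul_right, real_inner_smul_right, hGT, hGn]
    ring
  have hGT1 : (inner ℝ G (deriv x₁ t) : ℝ) = -(cθ * k) := by
    rw [hT1dec, inner_add_right, real_inner_smul_right, real_inner_smul_right, hGT, hGn]
    ring
  -- (A) : value of geodTors x₁ n₁ t
  have hA : geodTors x₁ n₁ t = sp * (sθ * k) := by
    rw [geodTors, hG1.deriv, real_inner_smul_left, hGn1]
  -- (B) : from differentiating the position relation
  have hxσ : HasDerivAt x (deriv x σ) σ := (hxd σ).hasDerivAt
  have hxcomp : HasDerivAt (fun u => x (s u)) (sp • deriv x σ) t := hxσ.scomp t hsder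
  have hrhs : HasDerivAt (fun u => x₁ u + lam • gvec x₁ n₁ u)
      (deriv x₁ t + lam • (sp • G)) t :=
    ((hx1s.differentiable (by simp)) t).hasDerivAt.add (hG1.const_smul lam)
  have hfe : (fun u => x (s u)) = fun u => x₁ u + lam • gvec x₁ n₁ u := funext hpos
  have hBvec : sp • deriv x σ = deriv x₁ t + lam • (sp • G) := by
    have := hxcomp
    rw [hfe] at this
    exact this.unique hrhs
  have hT1T1 : (inner ℝ (deriv x₁ t) (deriv x₁ t) : ℝ) = 1 := by
    rw [real_inner_self_eq_norm_sq, hx1u t]; norm_num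
  have hn1T1 : (inner ℝ (n₁ t) (deriv x₁ t) : ℝ) = 0 := hn1o t
  have hTσT1 : (inner ℝ (deriv x σ) (deriv x₁ t) : ℝ) = cθ := by
    rw [hT t, ← hsθ, ← hcθ, inner_sub_left, real_inner_smul_left, real_inner_smul_left,
      hT1T1, hn1T1]
    ring
  have hB : sp * cθ = 1 + lam * (sp * -(cθ * k)) := by
    have h := congrArg (fun v : E3 => (inner ℝ v (deriv x₁ t) : ℝ)) hBvec
    simp only [inner_add_left, real_inner_smul_left, hTσT1, hT1T1, hGT1] at h
    linarith
  rw [hA]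
  linear_combination (-(k * sθ * sp)) * hB
end
end
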